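/- arXiv:2407.11694 — 4 statements merged into one kernel-verified Lean document; each statement's English description precedes it below -/
import Mathlib

section
/- Let ψ^new = β * ψ where ψ is the Dedekind psi function and β is the multiplicative function with β(p) = -2, β(p²) = 1, β(p^r) = 0 for r ≥ 3. Then for all N ≥ 1, ψ^new(N) ≥ N / π₁(N), where π₁(N) = ∏_{p | N} (1 + (p+1)/(p² - p - 1)). -/
/-!
Both sides are multiplicative in `N`, and `1 + (p + 1) / (p² - p - 1) = p² / (p² - p - 1)`, so it
suffices to show `p ^ e * (p² - p - 1) ≤ p² * (β * ψ) (p ^ e)` for every prime power. Since `β`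
vanishes on `p ^ r` for `r ≥ 3`, `(β * ψ) (p ^ e)` has at most three terms: it is `p - 1` for
`e = 1`, `p² - p - 1` for `e = 2` (equality) and `p ^ (e - 3) * (p + 1) * (p - 1)²` for `e ≥ 3`,
which exceeds `p ^ (e - 2) * (p² - p - 1)` by `p ^ (e - 3)`.
-/

open ArithmeticFunction Finset

namespace ArithmeticFunction

theorem mul_apply_prime_pow {R : Type*} [Semiring R] (f g : ArithmeticFunction R) {p : ℕ}
    (hp : p.Prime) (e : ℕ) :
    (f * g) (p ^ e) = ∑ i ∈ range (e + 1), f (p ^ i) * g (p ^ (e - i)) := by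
  rw [mul_apply, Nat.sum_divisorsAntidiagonal (f := fun x y => f x * g y),
    Nat.sum_divisors_prime_pow hp]
  refine sum_congr rfl fun i hi => ?_
  rw [Nat.pow_div (Nat.lt_succ_iff.mp (mem_range.mp hi)) hp.pos]

theorem mul_apply_prime_pow_add_two {R : Type*} [Semiring R] {f : ArithmeticFunction R}
    (g : ArithmeticFunction R) {p : ℕ} (hp : p.Prime) (hf : ∀ r, 3 ≤ r → f (p ^ r) = 0)
    (k : ℕ) :
    (f * g) (p ^ (k + 2)) =
      f 1 * g (p ^ (k + 2)) + f p * g (p ^ (k + 1)) + f (p ^ 2) * g (p ^ k) := by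
  rw [mul_apply_prime_pow f g hp, show k + 2 + 1 = 3 + k by omega, sum_range_add,
    sum_eq_zero (s := range k) fun i _ => by rw [hf _ (by omega), zero_mul]]
  simp [sum_range_succ, show k + 2 - 1 = k + 1 by omega]

theorem IsMultiplicative.div_prod_primeFactors_le {f : ArithmeticFunction ℤ}
    (hf : f.IsMultiplicative) (c : ℕ → ℚ) (hc : ∀ p, p.Prime → 0 < c p)
    (h : ∀ p e : ℕ, p.Prime → 1 ≤ e → (p : ℚ) ^ e / c p ≤ f (p ^ e)) {N : ℕ} (hN : N ≠ 0) :
    (N : ℚ) / ∏ p ∈ N.primeFactors, c p ≤ f N := by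
  have hN_prod : (N : ℚ) = ∏ p ∈ N.primeFactors, (p : ℚ) ^ N.factorization p := by
    conv_lhs => rw [← Nat.prod_factorization_pow_eq_self hN]
    rw [Nat.prod_factorization_eq_prod_primeFactors]
    push_cast
    rfl
  have hf_prod : (f N : ℚ) = ∏ p ∈ N.primeFactors, (f (p ^ N.factorization p) : ℚ) := by
    rw [hf.multiplicative_factorization _ hN, Nat.prod_factorization_eq_prod_primeFactors]
    push_cast
    rfl
  rw [hN_prod, hf_prod, ← prod_div_distrib]
  refine prod_le_prod (fun p hp => ?_) (fun p hp => ?_)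
  · exact div_nonneg (by positivity) (hc p (Nat.prime_of_mem_primeFactors hp)).le
  · have hp' := Nat.prime_of_mem_primeFactors hp
    exact h p _ hp' (hp'.factorization_pos_of_dvd hN (Nat.dvd_of_mem_primeFactors hp))

end ArithmeticFunction

theorem sq_sub_sub_one_pos {R : Type*} [CommRing R] [LinearOrder R] [IsStrictOrderedRing R]
    {x : R} (hx : 2 ≤ x) : 0 < x ^ 2 - x - 1 := by
  nlinarith

theorem one_add_div_sq_sub_sub_one {K : Type*} [Field K] {x : K} (hd : x ^ 2 - x - 1 ≠ 0) :
    1 + (x + 1) / (x ^ 2 - x - 1) = x ^ 2 / (x ^ 2 - x - 1) := by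
  rw [eq_div_iff hd, add_mul, div_mul_cancel₀ _ hd]
  ring

section

variable {β ψ : ArithmeticFunction ℤ} (hβ : β.IsMultiplicative)
  (hβ1 : ∀ p : ℕ, p.Prime → β p = -2) (hβ2 : ∀ p : ℕ, p.Prime → β (p ^ 2) = 1)
  (hβ3 : ∀ p r : ℕ, p.Prime → 3 ≤ r → β (p ^ r) = 0) (hψ : ψ.IsMultiplicative)
  (hψp : ∀ p r : ℕ, p.Prime → 1 ≤ r → ψ (p ^ r) = (p : ℤ) ^ r + (p : ℤ) ^ (r - 1))
include hβ hβ1 hβ2 hβ3 hψ hψp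

theorem pow_mul_sq_sub_sub_one_le_mul_apply_prime_pow {p e : ℕ} (hp : p.Prime) (he : 1 ≤ e) :
    (p : ℤ) ^ e * ((p : ℤ) ^ 2 - p - 1) ≤ (p : ℤ) ^ 2 * (β * ψ) (p ^ e) := by
  have hp2 : (2 : ℤ) ≤ p := by exact_mod_cast hp.two_le
  have hψ_succ (r : ℕ) : ψ (p ^ (r + 1)) = (p : ℤ) ^ (r + 1) + p ^ r := by
    simpa using hψp p (r + 1) hp (by omega)
  have hψ_prime : ψ p = p + 1 := by simpa using hψ_succ 0
  match e, he with
  | 1, _ =>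
    have hval : (β * ψ) (p ^ 1) = p - 1 := by
      rw [mul_apply_prime_pow β ψ hp 1]
      simp only [sum_range_succ, sum_range_zero, pow_zero, pow_one, Nat.sub_zero, Nat.sub_self,
        hβ.map_one, hψ.map_one, hβ1 p hp, hψ_prime]
      ring
    rw [hval]
    nlinarith
  | 2, _ =>
    have hval : (β * ψ) (p ^ 2) = p ^ 2 - p - 1 := by
      rw [mul_apply_prime_pow_add_two ψ hp (hβ3 p · hp) 0]
      simp only [zero_add, pow_zero, pow_one, hβ.map_one, hψ.map_one, hβ1 p hp, hβ2 p hp,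
        hψ_succ 1, hψ_prime]
      ring
    rw [hval]
  | k + 3, _ =>
    have hval : (β * ψ) (p ^ (k + 3)) =
        (p : ℤ) ^ (k + 3) - p ^ (k + 2) - p ^ (k + 1) + p ^ k := by
      rw [mul_apply_prime_pow_add_two ψ hp (hβ3 p · hp) (k + 1)]
      simp only [hβ.map_one, hβ1 p hp, hβ2 p hp, hψ_succ]
      ring
    have hgap : (p : ℤ) ^ 2 * (β * ψ) (p ^ (k + 3)) - p ^ (k + 3) * ((p : ℤ) ^ 2 - p - 1)
        = p ^ (k + 2) := by
      rw [hval]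
      ring
    have : (0 : ℤ) ≤ p ^ (k + 2) := by positivity
    linarith

theorem pow_div_le_mul_apply_prime_pow {p e : ℕ} (hp : p.Prime) (he : 1 ≤ e) :
    (p : ℚ) ^ e / (1 + ((p : ℚ) + 1) / ((p : ℚ) ^ 2 - p - 1)) ≤ ((β * ψ) (p ^ e) : ℚ) := by
  have hp2 : (2 : ℚ) ≤ p := by exact_mod_cast hp.two_le
  have hd := sq_sub_sub_one_pos hp2
  have hbound : (p : ℚ) ^ e * ((p : ℚ) ^ 2 - p - 1) ≤ (p : ℚ) ^ 2 * ((β * ψ) (p ^ e) : ℚ) := by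
    exact_mod_cast pow_mul_sq_sub_sub_one_le_mul_apply_prime_pow hβ hβ1 hβ2 hβ3 hψ hψp hp he
  rw [one_add_div_sq_sub_sub_one hd.ne', div_div_eq_mul_div, div_le_iff₀ (by positivity)]
  linarith

end

theorem stmt_2 (β ψ : ArithmeticFunction ℤ)
    (hβ : β.IsMultiplicative)
    (hβ1 : ∀ p : ℕ, p.Prime → β p = -2)
    (hβ2 : ∀ p : ℕ, p.Prime → β (p ^ 2) = 1)
    (hβ3 : ∀ p r : ℕ, p.Prime → 3 ≤ r → β (p ^ r) = 0)
    (hψ : ψ.IsMultiplicative)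
    (hψp : ∀ p r : ℕ, p.Prime → 1 ≤ r → ψ (p ^ r) = (p : ℤ) ^ r + (p : ℤ) ^ (r - 1)) :
    ∀ N : ℕ, 1 ≤ N →
      (N : ℚ) / (∏ p ∈ N.primeFactors, (1 + ((p : ℚ) + 1) / ((p : ℚ) ^ 2 - p - 1)))
        ≤ ((β * ψ) N : ℚ) := by
  intro N hN
  refine (hβ.mul hψ).div_prod_primeFactors_le _ (fun p hp => ?_)
    (fun p e hp he => pow_div_le_mul_apply_prime_pow hβ hβ1 hβ2 hβ3 hψ hψp hp he) (by omega)
  have := sq_sub_sub_one_pos (x := (p : ℚ)) (by exact_mod_cast hp.two_le)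
  positivity
end

section
/- For every positive integer N, π₁(N) ≤ 12.033 · N^{1/64}, where π₁(N) = ∏_{p | N} (1 + (p+1)/(p² - p - 1)) and the product runs over distinct prime divisors of N. -/
/-!
For `p ≥ 23` the factor `1 + (p+1)/(p²-p-1)` is at most `p^(1/64)`: the factor decreases in `p`,
`p^(1/64)` increases, and they have already crossed at `p = 23`. Only the eight primes below `23`
have a factor exceeding `p^(1/64)`, and together they exceed it by a factor of at most `12.033`.
Hence `π₁(N) ≤ 12.033 ∏_{p ∣ N} p^(1/64) ≤ 12.033 N^(1/64)`.
-/

open Finset Real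

/-- Indices of `t` missing from `s` have `g ≤ f`, so the bound over `t` restricts to `s ∩ t`. -/
theorem Finset.prod_le_mul_prod_of_le_of_notMem {ι R : Type*} [CommRing R] [LinearOrder R]
    [IsStrictOrderedRing R] [DecidableEq ι] {s t : Finset ι} {f g : ι → R} {C : R}
    (hf : ∀ i ∈ s, 0 ≤ f i) (hg : ∀ i ∈ t, 0 < g i)
    (hfg : ∀ i ∈ s, i ∉ t → f i ≤ g i) (hgf : ∀ i ∈ t, g i ≤ f i)
    (ht : ∏ i ∈ t, f i ≤ C * ∏ i ∈ t, g i) :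
    ∏ i ∈ s, f i ≤ C * ∏ i ∈ s, g i := by
  have hst : ∏ i ∈ s ∩ t, f i ≤ C * ∏ i ∈ s ∩ t, g i := by
    have hpos : 0 < ∏ i ∈ t \ s, g i := prod_pos fun i hi ↦ hg i (mem_sdiff.1 hi).1
    refine le_of_mul_le_mul_right ?_ hpos
    calc (∏ i ∈ s ∩ t, f i) * ∏ i ∈ t \ s, g i
        ≤ (∏ i ∈ s ∩ t, f i) * ∏ i ∈ t \ s, f i :=
          mul_le_mul_of_nonneg_left
            (prod_le_prod (fun i hi ↦ (hg i (mem_sdiff.1 hi).1).le)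
              fun i hi ↦ hgf i (mem_sdiff.1 hi).1)
            (prod_nonneg fun i hi ↦ hf i (mem_inter.1 hi).1)
      _ = ∏ i ∈ t, f i := by rw [inter_comm, prod_inter_mul_prod_sdiff]
      _ ≤ C * ∏ i ∈ t, g i := ht
      _ = C * (∏ i ∈ s ∩ t, g i) * ∏ i ∈ t \ s, g i := by
          rw [mul_assoc, inter_comm, prod_inter_mul_prod_sdiff]
  have hsdiff : ∀ i ∈ s \ t, 0 ≤ f i ∧ f i ≤ g i := fun i hi ↦
    ⟨hf i (mem_sdiff.1 hi).1, hfg i (mem_sdiff.1 hi).1 (mem_sdiff.1 hi).2⟩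
  calc ∏ i ∈ s, f i = (∏ i ∈ s ∩ t, f i) * ∏ i ∈ s \ t, f i :=
        (prod_inter_mul_prod_sdiff s t f).symm
    _ ≤ C * (∏ i ∈ s ∩ t, g i) * ∏ i ∈ s \ t, g i :=
        mul_le_mul hst (prod_le_prod (fun i hi ↦ (hsdiff i hi).1) fun i hi ↦ (hsdiff i hi).2)
          (prod_nonneg fun i hi ↦ (hsdiff i hi).1)
          ((prod_nonneg fun i hi ↦ hf i (mem_inter.1 hi).1).trans hst)
    _ = C * ∏ i ∈ s, g i := by rw [mul_assoc, prod_inter_mul_prod_sdiff]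

theorem Nat.prod_primeFactors_rpow_le {N : ℕ} (hN : N ≠ 0) {r : ℝ} (hr : 0 ≤ r) :
    ∏ p ∈ N.primeFactors, (p : ℝ) ^ r ≤ (N : ℝ) ^ r := by
  rw [finsetProd_rpow _ _ fun p _ ↦ p.cast_nonneg, ← Nat.cast_prod]
  gcongr
  exact Nat.le_of_dvd (Nat.pos_of_ne_zero hN) (Nat.prod_primeFactors_dvd N)

noncomputable def piOneFactor (x : ℝ) : ℝ := 1 + (x + 1) / (x ^ 2 - x - 1)

lemma piOneFactor_pos {x : ℝ} (hx : 2 ≤ x) : 0 < piOneFactor x := by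
  have : 0 < x ^ 2 - x - 1 := by nlinarith
  unfold piOneFactor
  positivity

lemma Nat.Prime.piOneFactor_pos {p : ℕ} (hp : p.Prime) : 0 < piOneFactor p :=
  _root_.piOneFactor_pos (by exact_mod_cast hp.two_le)

/-- `piOneFactor 23 = 529/505`, and `(529/505)^64 ≈ 19.5 ≤ 23`. -/
lemma piOneFactor_le_rpow {x : ℝ} (hx : 23 ≤ x) : piOneFactor x ≤ x ^ ((1 : ℝ) / 64) :=
  calc piOneFactor x ≤ 529 / 505 := by
        have hden : 0 < x ^ 2 - x - 1 := by nlinarith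
        have : (x + 1) / (x ^ 2 - x - 1) ≤ 24 / 505 := by
          rw [div_le_div_iff₀ hden (by norm_num)]
          nlinarith
        rw [piOneFactor]
        linarith
    _ ≤ 23 ^ ((1 : ℝ) / 64) := by
        rw [one_div, le_rpow_inv_iff_of_pos (by norm_num) (by norm_num) (by norm_num)]
        norm_num
    _ ≤ x ^ ((1 : ℝ) / 64) := by gcongr

def smallPrimes : Finset ℕ := (range 23).filter Nat.Prime

lemma smallPrimes_eq : smallPrimes = {2, 3, 5, 7, 11, 13, 17, 19} := by decide

lemma rpow_le_piOneFactor_of_mem_smallPrimes {p : ℕ} (hp : p ∈ smallPrimes) :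
    (p : ℝ) ^ ((1 : ℝ) / 64) ≤ piOneFactor p := by
  have hpos := (mem_filter.1 hp).2.piOneFactor_pos
  rw [one_div, rpow_inv_le_iff_of_pos (by positivity) hpos.le (by norm_num)]
  rw [smallPrimes_eq] at hp
  fin_cases hp <;> norm_num [piOneFactor]

lemma prod_smallPrimes_piOneFactor_le :
    ∏ p ∈ smallPrimes, piOneFactor p ≤
      12.033 * ∏ p ∈ smallPrimes, (p : ℝ) ^ ((1 : ℝ) / 64) := by
  rw [finsetProd_rpow _ _ fun p _ ↦ p.cast_nonneg, smallPrimes_eq]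
  norm_num [piOneFactor]
  rw [← div_le_iff₀' (by norm_num), one_div,
    le_rpow_inv_iff_of_pos (by norm_num) (by norm_num) (by norm_num)]
  norm_num

lemma piOneFactor_le_rpow_of_notMem_smallPrimes {p : ℕ} (hp : p.Prime)
    (hsmall : p ∉ smallPrimes) :
    piOneFactor p ≤ (p : ℝ) ^ ((1 : ℝ) / 64) := by
  have : 23 ≤ p := not_lt.1 fun h ↦ hsmall (mem_filter.2 ⟨mem_range.2 h, hp⟩)
  exact piOneFactor_le_rpow (by exact_mod_cast this)

theorem stmt_10 (N : ℕ) (hN : 1 ≤ N) :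
    ∏ p ∈ N.primeFactors, (1 + ((p : ℝ) + 1) / ((p : ℝ) ^ 2 - p - 1))
      ≤ 12.033 * (N : ℝ) ^ ((1 : ℝ) / 64) :=
  calc ∏ p ∈ N.primeFactors, piOneFactor p
      ≤ 12.033 * ∏ p ∈ N.primeFactors, (p : ℝ) ^ ((1 : ℝ) / 64) :=
        prod_le_mul_prod_of_le_of_notMem
          (fun p hp ↦ (Nat.prime_of_mem_primeFactors hp).piOneFactor_pos.le)
          (fun p hp ↦ by have := (mem_filter.1 hp).2.pos; positivity)
          (fun p hp ↦
            piOneFactor_le_rpow_of_notMem_smallPrimes (Nat.prime_of_mem_primeFactors hp))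
          (fun p hp ↦ rpow_le_piOneFactor_of_mem_smallPrimes hp)
          prod_smallPrimes_piOneFactor_le
    _ ≤ 12.033 * (N : ℝ) ^ ((1 : ℝ) / 64) := by
        gcongr
        exact Nat.prod_primeFactors_rpow_le (by omega) (by norm_num)
end

section
/- For every positive integer N, 2^{ω(N)} ≤ 10.411 · N^{13/64}, where ω(N) denotes the number of distinct prime divisors of N. -/
/-!
Writing `r = 13/64`, we have `2 ^ ω(N) = ∏_{p ∣ N} (2 / p ^ r) · (∏_{p ∣ N} p) ^ r`, and the
product of the primes dividing `N` is at most `N`. Since `30 ^ 13 ≤ 2 ^ 64 ≤ 31 ^ 13`, the factor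
`2 / p ^ r` is at most `1` exactly for the primes `p ≥ 31`, so the first product is at most the
product over all primes below `31`, namely `2 ^ 10 / 6469693230 ^ r < 10.411`.
-/

open Finset

namespace Finset

variable {ι R : Type*} [CommMonoidWithZero R] [Preorder R] [ZeroLEOneClass R] [PosMulMono R]

theorem prod_le_prod_of_le_one_of_one_le {s t : Finset ι} {f : ι → R}
    (hf0 : ∀ i ∈ s, 0 ≤ f i) (hs : ∀ i ∈ s, i ∉ t → f i ≤ 1)
    (ht : ∀ i ∈ t, i ∉ s → 1 ≤ f i) :
    ∏ i ∈ s, f i ≤ ∏ i ∈ t, f i := by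
  classical
  calc ∏ i ∈ s, f i ≤ ∏ i ∈ s ∩ t, f i :=
        prod_le_prod_of_subset_of_le_one inter_subset_left hf0 fun i hi hst =>
          hs i hi fun hit => hst (mem_inter.2 ⟨hi, hit⟩)
    _ ≤ ∏ i ∈ t, f i :=
        prod_le_prod_of_subset_of_one_le inter_subset_right
          (fun i hi => hf0 i (mem_of_mem_inter_left hi)) fun i hi hst =>
          ht i hi fun his => hst (mem_inter.2 ⟨his, hi⟩)

end Finset

namespace Real

theorem le_rpow_div_iff {a b : ℝ} (ha : 0 ≤ a) (hb : 0 ≤ b) {m n : ℕ} (hn : n ≠ 0) :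
    a ≤ b ^ ((m : ℝ) / n) ↔ a ^ n ≤ b ^ m := by
  rw [div_eq_mul_inv, rpow_mul hb, rpow_natCast,
    le_rpow_inv_iff_of_pos ha (by positivity) (by positivity), rpow_natCast]

theorem rpow_div_le_iff {a b : ℝ} (ha : 0 ≤ a) (hb : 0 ≤ b) {m n : ℕ} (hn : n ≠ 0) :
    b ^ ((m : ℝ) / n) ≤ a ↔ b ^ m ≤ a ^ n := by
  rw [div_eq_mul_inv, rpow_mul hb, rpow_natCast,
    rpow_inv_le_iff_of_pos (by positivity) ha (by positivity), rpow_natCast]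

end Real

theorem rpow_thirteen_div_sixtyFour_le_two {x : ℝ} (h0 : 0 ≤ x) (hx : x ≤ 30) :
    x ^ ((13 : ℝ) / 64) ≤ 2 := by
  have key := Real.rpow_div_le_iff (m := 13) (n := 64) zero_le_two h0 (by norm_num)
  push_cast at key
  rw [key]
  calc x ^ 13 ≤ 30 ^ 13 := pow_le_pow_left₀ h0 hx 13
    _ ≤ 2 ^ 64 := by norm_num

theorem two_le_rpow_thirteen_div_sixtyFour {x : ℝ} (hx : 31 ≤ x) :
    2 ≤ x ^ ((13 : ℝ) / 64) := by
  have key := Real.le_rpow_div_iff (m := 13) (n := 64) zero_le_two (by linarith) (by norm_num)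
  push_cast at key
  rw [key]
  calc (2 : ℝ) ^ 64 ≤ 31 ^ 13 := by norm_num
    _ ≤ x ^ 13 := pow_le_pow_left₀ (by norm_num) hx 13

theorem pow_card_primeFactors_le {N : ℕ} (hN : N ≠ 0) {c r : ℝ} (hc : 0 ≤ c) (hr : 0 ≤ r) :
    c ^ N.primeFactors.card ≤ (∏ p ∈ N.primeFactors, c / (p : ℝ) ^ r) * (N : ℝ) ^ r := by
  have hpos : ∀ p ∈ N.primeFactors, (0 : ℝ) < (p : ℝ) ^ r := fun p hp => by
    have := (Nat.prime_of_mem_primeFactors hp).pos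
    positivity
  calc c ^ N.primeFactors.card
      = ∏ p ∈ N.primeFactors, c / (p : ℝ) ^ r * (p : ℝ) ^ r := by
        rw [← prod_const]
        exact prod_congr rfl fun p hp => (div_mul_cancel₀ _ (hpos p hp).ne').symm
    _ = (∏ p ∈ N.primeFactors, c / (p : ℝ) ^ r) *
          (∏ p ∈ N.primeFactors, (p : ℝ)) ^ r := by
        rw [prod_mul_distrib, Real.finsetProd_rpow _ _ fun _ _ => Nat.cast_nonneg _]
    _ ≤ (∏ p ∈ N.primeFactors, c / (p : ℝ) ^ r) * (N : ℝ) ^ r := by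
        gcongr
        rw [← Nat.cast_prod]
        exact_mod_cast Nat.le_of_dvd (Nat.pos_of_ne_zero hN) (Nat.prod_primeFactors_dvd N)

theorem prod_two_div_rpow_thirteen_div_sixtyFour_le {P : Finset ℕ} (hP : ∀ p ∈ P, p.Prime) :
    ∏ p ∈ P, 2 / (p : ℝ) ^ ((13 : ℝ) / 64) ≤ 10.411 := by
  have hpos : ∀ {p : ℕ}, p.Prime → (0 : ℝ) < (p : ℝ) ^ ((13 : ℝ) / 64) := fun hp => by
    have := hp.pos
    positivity
  calc ∏ p ∈ P, 2 / (p : ℝ) ^ ((13 : ℝ) / 64)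
      ≤ ∏ p ∈ Nat.primesBelow 31, 2 / (p : ℝ) ^ ((13 : ℝ) / 64) := by
        refine prod_le_prod_of_le_one_of_one_le (fun _ _ => by positivity)
          (fun p hp hp31 => ?_) fun p hp _ => ?_
        · rw [div_le_one (hpos (hP p hp))]
          refine two_le_rpow_thirteen_div_sixtyFour ?_
          have : 31 ≤ p := not_lt.1 fun h => hp31 (Nat.mem_primesBelow.2 ⟨h, hP p hp⟩)
          exact_mod_cast this
        · obtain ⟨hp31, hprime⟩ := Nat.mem_primesBelow.1 hp
          rw [one_le_div (hpos hprime)]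
          have : p ≤ 30 := by omega
          exact rpow_thirteen_div_sixtyFour_le_two (Nat.cast_nonneg p) (by exact_mod_cast this)
    _ = 2 ^ 10 / (6469693230 : ℝ) ^ ((13 : ℝ) / 64) := by
        have hcard : (Nat.primesBelow 31).card = 10 := by decide
        have hprod : ∏ p ∈ Nat.primesBelow 31, p = 6469693230 := by decide
        rw [prod_div_distrib, prod_const, hcard,
          Real.finsetProd_rpow _ _ fun _ _ => Nat.cast_nonneg _, ← Nat.cast_prod, hprod]
        norm_num
    _ ≤ 10.411 := by
        have key := Real.le_rpow_div_iff (a := 2 ^ 10 / 10.411) (b := 6469693230)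
          (m := 13) (n := 64) (by norm_num) (by norm_num) (by norm_num)
        push_cast at key
        rw [div_le_iff₀ (by positivity), ← div_le_iff₀' (by norm_num), key]
        norm_num

theorem stmt_11 (N : ℕ) (hN : 1 ≤ N) :
    (2 : ℝ) ^ N.primeFactors.card ≤ 10.411 * (N : ℝ) ^ ((13 : ℝ) / 64) :=
  calc (2 : ℝ) ^ N.primeFactors.card
      ≤ (∏ p ∈ N.primeFactors, 2 / (p : ℝ) ^ ((13 : ℝ) / 64)) * (N : ℝ) ^ ((13 : ℝ) / 64) :=
        pow_card_primeFactors_le (by omega) zero_le_two (by norm_num)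
    _ ≤ 10.411 * (N : ℝ) ^ ((13 : ℝ) / 64) := by
        gcongr
        exact prod_two_div_rpow_thirteen_div_sixtyFour_le fun _ => Nat.prime_of_mem_primeFactors
end

section
/- Fix m ≥ 1 and d | m with h := |d - m/d| ≠ 0, and let Σ_{m,d}(N) = ∑_{τ | N, gcd(τ, N/τ) | h} φ(gcd(τ, N/τ)). Define Σ^new_{m,d} = β * Σ_{m,d}. Then for every N ≥ 1, |Σ^new_{m,d}(N)| ≤ h · 4^{ω(h)}, where ω(h) is the number of distinct primes dividing h. -/
open ArithmeticFunction Finset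
open scoped ArithmeticFunction.Moebius

/-!
Since `β = μ * μ`, the new part is `μ * (μ * Σ)`, a multiplicative function. At a prime power
the divisors `p ^ i` and `p ^ (k - i)` of `p ^ k` have gcd `p ^ min i (k - i)`, so
`Σ (p ^ k) = ∑_{i ≤ k} f (p ^ ⌊i/2⌋)` with `f g = [g ∣ h] φ(g)`. Hence
`(μ * Σ) (p ^ k) = f (p ^ ⌊k/2⌋)` and, for `k ≥ 1`,
`Σ^new (p ^ k) = f (p ^ ⌊k/2⌋) - f (p ^ ⌊(k-1)/2⌋)`, a difference of two numbers in
`[0, p ^ v_p(h)]`. Multiplying over `p ∣ N` gives `|Σ^new N| ≤ ∏_{p ∣ N} p ^ v_p(h) ≤ h`.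
-/

theorem Nat.Coprime.gcd_mul_mul_of_dvd {m n a a' b b' : ℕ} (hmn : m.Coprime n)
    (ha : a ∣ m) (ha' : a' ∣ m) (hb : b ∣ n) (hb' : b' ∣ n) :
    (a * b).gcd (a' * b') = a.gcd a' * b.gcd b' := by
  rw [Nat.Coprime.gcd_mul _ ((hmn.coprime_dvd_left ha').coprime_dvd_right hb'),
    Nat.Coprime.gcd_mul_right_cancel a ((hmn.coprime_dvd_left ha').coprime_dvd_right hb).symm,
    Nat.Coprime.gcd_mul_left_cancel b ((hmn.coprime_dvd_left ha).coprime_dvd_right hb')]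

theorem Nat.prod_pow_factorization_dvd (s : Finset ℕ) {n : ℕ} (hn : n ≠ 0) :
    ∏ p ∈ s, p ^ n.factorization p ∣ n := by
  calc ∏ p ∈ s, p ^ n.factorization p
      = ∏ p ∈ s ∩ n.primeFactors, p ^ n.factorization p := by
        refine (prod_subset inter_subset_left fun p _ hp => ?_).symm
        have : p ∉ n.factorization.support := by simp_all
        rw [Finsupp.notMem_support_iff.mp this, pow_zero]
    _ ∣ ∏ p ∈ n.primeFactors, p ^ n.factorization p :=
        prod_dvd_prod_of_subset _ _ _ inter_subset_right
    _ = n := Nat.prod_factorization_pow_eq_self hn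

namespace ArithmeticFunction

variable {R : Type*}

def gcdDivisorSum [AddCommMonoid R] (f : ArithmeticFunction R) : ArithmeticFunction R :=
  ⟨fun N => ∑ τ ∈ N.divisors, f (τ.gcd (N / τ)), by simp⟩

theorem gcdDivisorSum_apply [AddCommMonoid R] (f : ArithmeticFunction R) (N : ℕ) :
    gcdDivisorSum f N = ∑ τ ∈ N.divisors, f (τ.gcd (N / τ)) := rfl

theorem IsMultiplicative.gcdDivisorSum [CommSemiring R] {f : ArithmeticFunction R}
    (hf : f.IsMultiplicative) : (gcdDivisorSum f).IsMultiplicative := by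
  refine ⟨by simp [gcdDivisorSum_apply, hf.map_one], fun {m n} hmn => ?_⟩
  simp only [gcdDivisorSum_apply]
  rw [Nat.divisors_mul, mul_def, sum_image hmn.mul_injOn_divisors, sum_product, sum_mul_sum]
  refine sum_congr rfl fun a ha => sum_congr rfl fun b hb => ?_
  rw [Nat.mem_divisors] at ha hb
  have hm : m / a ∣ m := Nat.div_dvd_of_dvd ha.1
  have hn : n / b ∣ n := Nat.div_dvd_of_dvd hb.1
  have hcop : (a.gcd (m / a)).Coprime (b.gcd (n / b)) :=
    (hmn.coprime_dvd_left ((Nat.gcd_dvd_left _ _).trans ha.1)).coprime_dvd_right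
      ((Nat.gcd_dvd_left _ _).trans hb.1)
  rw [← Nat.div_mul_div_comm ha.1 hb.1, hmn.gcd_mul_mul_of_dvd ha.1 hm hb.1 hn,
    hf.map_mul_of_coprime hcop]

theorem gcdDivisorSum_apply_prime_pow [AddCommMonoid R] (f : ArithmeticFunction R) {p : ℕ}
    (hp : p.Prime) (k : ℕ) : gcdDivisorSum f (p ^ k) = ∑ i ∈ range (k + 1), f (p ^ (i / 2)) := by
  have gcd_eq (i : ℕ) (hi : i ≤ k) : (p ^ i).gcd (p ^ k / p ^ i) = p ^ min i (k - i) := by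
    rw [Nat.pow_div hi hp.pos]
    rcases le_total i (k - i) with H | H
    · rw [Nat.gcd_eq_left (pow_dvd_pow p H), min_eq_left H]
    · rw [Nat.gcd_eq_right (pow_dvd_pow p H), min_eq_right H]
  rw [gcdDivisorSum_apply, Nat.sum_divisors_prime_pow hp]
  -- enumerate the exponents as `0, k, 1, k - 1, 2, …`: the `j`-th one, `i`,
  -- has `min i (k - i) = j / 2`
  refine sum_nbij' (fun i => if i ≤ k - i then 2 * i else 2 * (k - i) + 1)
    (fun j => if j % 2 = 0 then j / 2 else k - j / 2) ?_ ?_ ?_ ?_ fun i hi => ?_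
  iterate 4 (intro i hi; simp only [mem_range] at hi ⊢; split_ifs <;> omega)
  rw [mem_range] at hi
  rw [gcd_eq i (by omega)]
  split_ifs <;> congr 2 <;> omega

theorem moebius_mul_apply_prime_pow_succ (F : ArithmeticFunction ℤ) {p : ℕ} (hp : p.Prime)
    (k : ℕ) : (μ * F) (p ^ (k + 1)) = F (p ^ (k + 1)) - F (p ^ k) := by
  rw [mul_apply, Nat.sum_divisorsAntidiagonal (fun a b => μ a * F b),
    Nat.sum_divisors_prime_pow hp, sum_range_succ', sum_range_succ',
    sum_eq_zero fun j _ => by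
      rw [moebius_apply_prime_pow hp (by omega), if_neg (by omega), zero_mul],
    Nat.pow_div (by omega) hp.pos, zero_add, pow_one, moebius_apply_prime hp, pow_zero,
    moebius_apply_one, Nat.div_one, Nat.add_sub_cancel]
  ring

theorem moebius_mul_gcdDivisorSum_apply_prime_pow (f : ArithmeticFunction ℤ) {p : ℕ}
    (hp : p.Prime) (k : ℕ) : (μ * gcdDivisorSum f) (p ^ k) = f (p ^ (k / 2)) := by
  cases k with
  | zero => simp [mul_apply, gcdDivisorSum_apply]
  | succ k =>
    rw [moebius_mul_apply_prime_pow_succ _ hp, gcdDivisorSum_apply_prime_pow f hp,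
      gcdDivisorSum_apply_prime_pow f hp, sum_range_succ, add_sub_cancel_left]

theorem abs_moebius_mul_moebius_mul_gcdDivisorSum_apply_prime_pow_le
    {f : ArithmeticFunction ℤ} {p : ℕ} (hp : p.Prime) {B : ℤ} (hf : ∀ i, f (p ^ i) ∈ Set.Icc 0 B)
    {k : ℕ} (hk : k ≠ 0) : |(μ * (μ * gcdDivisorSum f)) (p ^ k)| ≤ B := by
  obtain ⟨k, rfl⟩ := Nat.exists_eq_succ_of_ne_zero hk
  rw [moebius_mul_apply_prime_pow_succ _ hp, moebius_mul_gcdDivisorSum_apply_prime_pow f hp,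
    moebius_mul_gcdDivisorSum_apply_prime_pow f hp]
  exact abs_sub_le_of_nonneg_of_le (hf _).1 (hf _).2 (hf _).1 (hf _).2

theorem eq_moebius_mul_moebius {β : ArithmeticFunction ℤ} (hβ : β.IsMultiplicative)
    (hβ1 : ∀ p : ℕ, p.Prime → β p = -2) (hβ2 : ∀ p : ℕ, p.Prime → β (p ^ 2) = 1)
    (hβ3 : ∀ p r : ℕ, p.Prime → 3 ≤ r → β (p ^ r) = 0) : β = μ * μ := by
  have hμμ := isMultiplicative_moebius.mul isMultiplicative_moebius
  refine (hβ.eq_iff_eq_on_prime_powers _ _ hμμ).mpr fun p k hp => ?_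
  rcases k with _ | _ | _ | k
  · simp [hβ.map_one, hμμ.map_one]
  all_goals rw [moebius_mul_apply_prime_pow_succ _ hp]
  · simp [hβ1 p hp, moebius_apply_prime hp]
  · simp [hβ2 p hp, moebius_apply_prime_pow hp, moebius_apply_prime hp]
  · simp [hβ3 p (k + 1 + 1 + 1) hp (by omega), moebius_apply_prime_pow hp]

theorem IsMultiplicative.abs_apply_le_of_abs_apply_prime_pow_le [CommRing R] [LinearOrder R]
    [IsStrictOrderedRing R] {F : ArithmeticFunction R} (hF : F.IsMultiplicative) {n N : ℕ}
    (hn : n ≠ 0) (hN : N ≠ 0)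
    (hle : ∀ p k : ℕ, p.Prime → k ≠ 0 → |F (p ^ k)| ≤ (p : R) ^ n.factorization p) :
    |F N| ≤ n := by
  rw [hF.multiplicative_factorization F hN, Finsupp.prod, abs_prod]
  calc ∏ p ∈ N.factorization.support, |F (p ^ N.factorization p)|
      ≤ ∏ p ∈ N.primeFactors, (p : R) ^ n.factorization p :=
        prod_le_prod (fun _ _ => abs_nonneg _) fun p hp =>
          hle p _ (Nat.prime_of_mem_primeFactors hp) (Finsupp.mem_support_iff.mp hp)
    _ = ((∏ p ∈ N.primeFactors, p ^ n.factorization p : ℕ) : R) := by push_cast; rfl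
    _ ≤ n := Nat.cast_le.mpr (Nat.le_of_dvd (Nat.pos_of_ne_zero hn)
        (Nat.prod_pow_factorization_dvd _ hn))

def totientOnDivisors (h : ℕ) : ArithmeticFunction ℤ :=
  ⟨fun g => if g ∣ h then (g.totient : ℤ) else 0, by simp⟩

theorem totientOnDivisors_apply (h g : ℕ) :
    totientOnDivisors h g = if g ∣ h then (g.totient : ℤ) else 0 := rfl

theorem isMultiplicative_totientOnDivisors (h : ℕ) : (totientOnDivisors h).IsMultiplicative := by
  refine ⟨by simp [totientOnDivisors_apply], fun {x y} hxy => ?_⟩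
  have mul_dvd_iff : x * y ∣ h ↔ x ∣ h ∧ y ∣ h :=
    ⟨fun H => ⟨(dvd_mul_right x y).trans H, (dvd_mul_left y x).trans H⟩,
      fun ⟨hx, hy⟩ => hxy.mul_dvd_of_dvd_of_dvd hx hy⟩
  simp only [totientOnDivisors_apply, mul_dvd_iff]
  split_ifs <;> simp_all [Nat.totient_mul hxy]

theorem totientOnDivisors_apply_prime_pow_mem_Icc {h p : ℕ} (hh : h ≠ 0) (hp : p.Prime) (i : ℕ) :
    totientOnDivisors h (p ^ i) ∈ Set.Icc 0 ((p : ℤ) ^ h.factorization p) := by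
  rw [totientOnDivisors_apply]
  split_ifs with hdvd
  · refine ⟨by positivity, ?_⟩
    calc ((p ^ i).totient : ℤ) ≤ ((p ^ i : ℕ) : ℤ) := by exact_mod_cast Nat.totient_le _
      _ ≤ (p : ℤ) ^ h.factorization p := by
        push_cast
        exact pow_le_pow_right₀ (by exact_mod_cast hp.one_le)
          ((hp.pow_dvd_iff_le_factorization hh).mp hdvd)
  · exact ⟨le_rfl, by positivity⟩

end ArithmeticFunction

theorem stmt_17_general
    (h : ℕ) (hne : h ≠ 0)
    (β Sg : ArithmeticFunction ℤ)
    (hβ : β.IsMultiplicative)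
    (hβ1 : ∀ p : ℕ, p.Prime → β p = -2)
    (hβ2 : ∀ p : ℕ, p.Prime → β (p ^ 2) = 1)
    (hβ3 : ∀ p r : ℕ, p.Prime → 3 ≤ r → β (p ^ r) = 0)
    (hSg : ∀ N : ℕ, 0 < N → Sg N =
      ∑ τ ∈ N.divisors,
        if Nat.gcd τ (N / τ) ∣ h then ((Nat.gcd τ (N / τ)).totient : ℤ) else 0) :
    ∀ N : ℕ, 1 ≤ N → |(β * Sg) N| ≤ (h : ℤ) * 4 ^ h.primeFactors.card := by
  intro N hN
  have hSg' : Sg = gcdDivisorSum (totientOnDivisors h) := by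
    ext n
    rcases n.eq_zero_or_pos with rfl | hn
    · simp
    · exact hSg n hn
  rw [hSg', eq_moebius_mul_moebius hβ hβ1 hβ2 hβ3, mul_assoc]
  have hmul : (μ * (μ * gcdDivisorSum (totientOnDivisors h))).IsMultiplicative :=
    isMultiplicative_moebius.mul
      (isMultiplicative_moebius.mul (isMultiplicative_totientOnDivisors h).gcdDivisorSum)
  calc |(μ * (μ * gcdDivisorSum (totientOnDivisors h))) N| ≤ h :=
        hmul.abs_apply_le_of_abs_apply_prime_pow_le hne (by omega) fun p _ hp hk =>
          abs_moebius_mul_moebius_mul_gcdDivisorSum_apply_prime_pow_le hp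
            (totientOnDivisors_apply_prime_pow_mem_Icc hne hp) hk
    _ ≤ h * 4 ^ h.primeFactors.card :=
        le_mul_of_one_le_right (by positivity) (one_le_pow₀ (by norm_num))

theorem stmt_17 (m d : ℕ) (hm : 1 ≤ m) (hd : d ∣ m)
    (h : ℕ) (hh : h = ((d : ℤ) - ((m / d : ℕ) : ℤ)).natAbs) (hne : h ≠ 0)
    (β Sg : ArithmeticFunction ℤ)
    (hβ : β.IsMultiplicative)
    (hβ1 : ∀ p : ℕ, p.Prime → β p = -2)
    (hβ2 : ∀ p : ℕ, p.Prime → β (p ^ 2) = 1)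
    (hβ3 : ∀ p r : ℕ, p.Prime → 3 ≤ r → β (p ^ r) = 0)
    (hSg : ∀ N : ℕ, 0 < N → Sg N =
      ∑ τ ∈ N.divisors,
        if Nat.gcd τ (N / τ) ∣ h then ((Nat.gcd τ (N / τ)).totient : ℤ) else 0) :
    ∀ N : ℕ, 1 ≤ N → |(β * Sg) N| ≤ (h : ℤ) * 4 ^ h.primeFactors.card :=
  stmt_17_general h hne β Sg hβ hβ1 hβ2 hβ3 hSg
end
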